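/- arXiv:2409.05498 — 6 statements merged into one kernel-verified Lean document; each statement's English description precedes it below -/
import Mathlib

section
/- From singular to stopwatch, forward simulation: Let G_S be an initialized singular game and let G_W be the stopwatch game obtained from G_S by the flow-normalization construction. Then the map γ1 : Q(G_S) → Q(G_W), γ1(l,v) = (l,v*), where v*(x) = v(x)/flow(l,x) if flow(l,x) ≠ 0 and v*(x) = v(x) otherwise, is an alternating simulation witnessing T(G_S) ≼ T(G_W). -/
/-!
Turn-based game structures, alternating simulation, and related notions,
following Dima, Hammami, Oualhadj, Laleau,
"Deciding the synthesis problem for hybrid games through bisimulation".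
-/

/-- A turn-based game structure over a set of observations `Obs`:
configurations (partitioned between Player 1 and Player 2 via `isP1`),
an initial Player-1 configuration, moves, a transition relation
(`trans p m p'` holds when the -- partial, possibly nondeterministic --
 transition function is defined on `(p, m)` with value `p'`),
and a labeling of configurations by observations. -/
structure TBGame (Obs : Type) where
  /-- configurations -/
  Conf : Type
  /-- moves -/
  Mv : Type
  /-- the configurations owned by Player 1 (the others belong to Player 2) -/
  isP1 : Conf → Prop
  /-- initial configuration -/
  init : Conf
  /-- the initial configuration belongs to Player 1 -/
  init_p1 : isP1 init
  /-- the transitions -/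
  trans : Conf → Mv → Conf → Prop
  /-- labeling of configurations with observations -/
  lbl : Conf → Obs

/-- `R` is an alternating simulation between `G1` and `G2`:
it relates only same-player configurations, preserves labels,
every Player-1 transition of `G1` from `p` is matched by some transition
of `G2` from `q` staying in `R`, and every Player-2 transition of `G2`
from `q` is matched by some transition of `G1` from `p` staying in `R`. -/
def IsAltSim {Obs : Type} (G1 G2 : TBGame Obs) (R : G1.Conf → G2.Conf → Prop) : Prop :=
  (∀ p q, R p q → G1.lbl p = G2.lbl q) ∧
  (∀ p q, R p q → (G1.isP1 p ↔ G2.isP1 q)) ∧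
  (∀ p q, R p q → G1.isP1 p →
      ∀ m p', G1.trans p m p' → ∃ m' q', G2.trans q m' q' ∧ R p' q') ∧
  (∀ p q, R p q → ¬ G1.isP1 p →
      ∀ m' q', G2.trans q m' q' → ∃ m p', G1.trans p m p' ∧ R p' q')

/-- `R` witnesses `T(G1) ≼ T(G2)` : `R` is an alternating simulation
containing the pair of initial configurations. -/
def Simulates {Obs : Type} (G1 G2 : TBGame Obs) (R : G1.Conf → G2.Conf → Prop) : Prop :=
  IsAltSim G1 G2 R ∧ R G1.init G2.init

/-- The data of an edge of a hybrid game: source and target locations, an action,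
a simple compact constraint assigning to each variable `x` the compact rational
interval `[lo x, hi x]`, and a reset function `rst : X → ℚ ∪ {⊥}`
(`none` meaning `⊥`, i.e. no reset). -/
structure EdgeData (L X Act : Type) where
  src : L
  act : Act
  lo : X → ℚ
  hi : X → ℚ
  rst : X → Option ℚ
  tgt : L

/-- An initialized singular game (ISR game): locations partitioned between the
two players, an initial Player-1 location, rational flows (slopes) for each
variable in each location, observations labeling the locations, and a set of
edges, subject to the initialization condition: any variable whose flow changes
across an edge is reset on that edge. -/
structure ISRGame (L X Act Obs : Type) where
  /-- the locations owned by Player 1 (the others belong to Player 2) -/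
  isL1 : L → Prop
  /-- initial location -/
  l0 : L
  l0_p1 : isL1 l0
  /-- labeling of locations with observations -/
  lbl : L → Obs
  /-- the slope of each variable in each location -/
  flow : L → X → ℚ
  /-- the edges -/
  E : Set (EdgeData L X Act)
  /-- initialization: whenever the flow of `x` differs between the two endpoints
  of an edge, `x` is reset on that edge -/
  initialized : ∀ e ∈ E, ∀ x, flow e.src x ≠ flow e.tgt x → e.rst x ≠ none

/-- The semantics `T(G)` of an ISR game `G` as a turn-based game structure:
configurations are pairs (location, valuation of the variables in `ℝ`),
the initial configuration is `(l0, 0)`, moves are pairs (action, nonnegative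
delay), and `(l,v) →⁽ᵃ'ᵗ⁾ (l',v')` whenever some edge `e = (l,a,φ_e,rst_e,l')`
satisfies `v x + t · flow l x ∈ φ_e x` for all `x`, `v' x = rst_e x` when
`rst_e x ≠ ⊥`, and `v' x = v x + t · flow l x` otherwise. -/
def ISRGame.semantics {L X Act Obs : Type} (G : ISRGame L X Act Obs) : TBGame Obs where
  Conf := L × (X → ℝ)
  Mv := Act × NNReal
  isP1 := fun c => G.isL1 c.1
  init := (G.l0, fun _ => 0)
  init_p1 := G.l0_p1
  lbl := fun c => G.lbl c.1
  trans := fun c m c' =>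
    ∃ e ∈ G.E, e.src = c.1 ∧ e.act = m.1 ∧ e.tgt = c'.1 ∧
      (∀ x, (e.lo x : ℝ) ≤ c.2 x + (m.2 : ℝ) * (G.flow c.1 x : ℝ) ∧
            c.2 x + (m.2 : ℝ) * (G.flow c.1 x : ℝ) ≤ (e.hi x : ℝ)) ∧
      (∀ x, c'.2 x =
        (e.rst x).elim (c.2 x + (m.2 : ℝ) * (G.flow c.1 x : ℝ)) (fun r => (r : ℝ)))

/-- The transformation of an edge of an initialized singular game into an edge
of the associated stopwatch game: the constraint of each variable is divided
by the flow of the variable in the source location (when nonzero; the division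
of a compact interval by a negative rational swaps its endpoints), and the reset
value of each reset variable is divided by the flow of the variable in the
target location (when nonzero). -/
def stopwatchEdge {L X Act Obs : Type} (G : ISRGame L X Act Obs)
    (e : EdgeData L X Act) : EdgeData L X Act where
  src := e.src
  act := e.act
  lo := fun x =>
    if G.flow e.src x = 0 then e.lo x
    else if 0 < G.flow e.src x then e.lo x / G.flow e.src x
    else e.hi x / G.flow e.src x
  hi := fun x =>
    if G.flow e.src x = 0 then e.hi x
    else if 0 < G.flow e.src x then e.hi x / G.flow e.src x
    else e.lo x / G.flow e.src x
  rst := fun x =>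
    (e.rst x).map (fun c => if G.flow e.tgt x = 0 then c else c / G.flow e.tgt x)
  tgt := e.tgt

/-- The initialized stopwatch game `G_W` obtained from an initialized singular
game `G_S` by flow normalization: the flow of each variable becomes `0` if it
was `0` and `1` otherwise, and constraints and resets are rescaled accordingly. -/
def stopwatchOf {L X Act Obs : Type} (G : ISRGame L X Act Obs) : ISRGame L X Act Obs where
  isL1 := G.isL1
  l0 := G.l0
  l0_p1 := G.l0_p1
  lbl := G.lbl
  flow := fun l x => if G.flow l x = 0 then 0 else 1
  E := stopwatchEdge G '' G.E
  initialized := by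
    rintro e ⟨e0, he0, rfl⟩ x hx
    have hne : G.flow e0.src x ≠ G.flow e0.tgt x := by
      intro h
      exact hx (by simp only [stopwatchEdge, h] <;> rfl)
    have h0 := G.initialized e0 he0 x hne
    simp only [stopwatchEdge]
    cases hr : e0.rst x with
    | none => exact absurd hr h0
    | some c => simp [hr]

/-- `stopwatchOf G` is indeed a stopwatch game : all flows are `0` or `1`. -/
theorem stopwatchOf_flow {L X Act Obs : Type} (G : ISRGame L X Act Obs) (l : L) (x : X) :
    (stopwatchOf G).flow l x = 0 ∨ (stopwatchOf G).flow l x = 1 := by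
  by_cases h : G.flow l x = 0 <;> simp [stopwatchOf, h]

/-- The transformed valuation `v*` : `v* x = v x / flow l x` when `flow l x ≠ 0`,
and `v* x = v x` otherwise. -/
noncomputable def vstar {L X : Type} (flow : L → X → ℚ) (l : L) (v : X → ℝ) : X → ℝ :=
  fun x => if flow l x = 0 then v x else v x / (flow l x : ℝ)

/-- The relation (graph of the map) `γ1 (l,v) = (l, v*)` between configurations
of `T(G_S)` and configurations of `T(G_W)`. -/
def gamma1 {L X Act Obs : Type} (G : ISRGame L X Act Obs) :
    (ISRGame.semantics G).Conf → (ISRGame.semantics (stopwatchOf G)).Conf → Prop :=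
  fun p q => q.1 = p.1 ∧ q.2 = vstar G.flow p.1 p.2

/-!
Dividing each variable by its (nonzero) flow turns an elapse of time `t` at slope `f` into an
elapse of time `t` at slope `1`, and turns a guard `y ∈ [lo, hi]` into `y / f ∈ [lo / f, hi / f]`
(endpoints swapped when `f < 0`). Resets are rescaled by the flow of the target location, and a
variable that is not reset keeps its flow by initialization, so both games take the same edges
with the same delays and `γ1` maps the successors of `G_S` exactly onto those of `G_W`.
-/

section DivIcc

variable {𝕜 : Type*} [Field 𝕜] [LinearOrder 𝕜] [IsStrictOrderedRing 𝕜] {f : 𝕜}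

theorem div_mem_Icc_div_iff_of_pos (hf : 0 < f) (y lo hi : 𝕜) :
    y / f ∈ Set.Icc (lo / f) (hi / f) ↔ y ∈ Set.Icc lo hi := by
  simp only [Set.mem_Icc, div_le_div_iff_of_pos_right hf]

theorem div_mem_Icc_div_iff_of_neg (hf : f < 0) (y lo hi : 𝕜) :
    y / f ∈ Set.Icc (hi / f) (lo / f) ↔ y ∈ Set.Icc lo hi := by
  simp only [Set.mem_Icc, div_le_div_right_of_neg hf, and_comm]

end DivIcc

def elapse {L X : Type} (flow : L → X → ℚ) (l : L) (v : X → ℝ) (t : ℝ) : X → ℝ :=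
  fun x => v x + t * (flow l x : ℝ)

namespace EdgeData

variable {L X Act : Type}

def Enabled (e : EdgeData L X Act) (w : X → ℝ) : Prop :=
  ∀ x, w x ∈ Set.Icc (e.lo x : ℝ) (e.hi x : ℝ)

def reset (e : EdgeData L X Act) (w : X → ℝ) : X → ℝ :=
  fun x => (e.rst x).elim (w x) (fun r => (r : ℝ))

end EdgeData

namespace ISRGame

variable {L X Act Obs : Type} (G : ISRGame L X Act Obs)

theorem semantics_trans_iff {l l' : L} {v v' : X → ℝ} {a : Act} {t : NNReal} :
    G.semantics.trans (l, v) (a, t) (l', v') ↔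
      ∃ e ∈ G.E, e.src = l ∧ e.act = a ∧ e.tgt = l' ∧
        e.Enabled (elapse G.flow l v t) ∧ v' = e.reset (elapse G.flow l v t) := by
  simp only [funext_iff]
  rfl

theorem vstar_elapse (l : L) (v : X → ℝ) (t : ℝ) :
    vstar G.flow l (elapse G.flow l v t) = elapse (stopwatchOf G).flow l (vstar G.flow l v) t := by
  funext x
  by_cases h : G.flow l x = 0
  · simp [vstar, elapse, stopwatchOf, h]
  · have hf : (G.flow l x : ℝ) ≠ 0 := by exact_mod_cast h
    simp only [vstar, elapse, stopwatchOf, if_neg h, Rat.cast_one, mul_one]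
    field_simp

theorem stopwatchEdge_enabled_vstar_iff (e : EdgeData L X Act) (w : X → ℝ) :
    (stopwatchEdge G e).Enabled (vstar G.flow e.src w) ↔ e.Enabled w := by
  refine forall_congr' fun x => ?_
  rcases lt_trichotomy (G.flow e.src x) 0 with hneg | hzero | hpos
  · have hf : (G.flow e.src x : ℝ) < 0 := by exact_mod_cast hneg
    simp only [stopwatchEdge, vstar, if_neg hneg.ne, if_neg hneg.not_gt]
    push_cast
    exact div_mem_Icc_div_iff_of_neg hf _ _ _
  · simp [stopwatchEdge, vstar, hzero]
  · have hf : 0 < (G.flow e.src x : ℝ) := by exact_mod_cast hpos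
    simp only [stopwatchEdge, vstar, if_neg hpos.ne', if_pos hpos]
    push_cast
    exact div_mem_Icc_div_iff_of_pos hf _ _ _

/-- Initialization is what makes this work: a variable that is not reset keeps its flow,
so it is rescaled by the same factor in the source and in the target location. -/
theorem stopwatchEdge_reset_vstar {e : EdgeData L X Act} (he : e ∈ G.E) (w : X → ℝ) :
    (stopwatchEdge G e).reset (vstar G.flow e.src w) = vstar G.flow e.tgt (e.reset w) := by
  funext x
  cases hr : e.rst x with
  | some r => by_cases h : G.flow e.tgt x = 0 <;> simp [stopwatchEdge, EdgeData.reset, vstar, hr, h]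
  | none =>
    have hflow : G.flow e.src x = G.flow e.tgt x := by
      by_contra hne
      exact G.initialized e he x hne hr
    simp [stopwatchEdge, EdgeData.reset, vstar, hr, hflow]

theorem stopwatchOf_trans_vstar_iff {l l' : L} {v w' : X → ℝ} {a : Act} {t : NNReal} :
    (stopwatchOf G).semantics.trans (l, vstar G.flow l v) (a, t) (l', w') ↔
      ∃ v', G.semantics.trans (l, v) (a, t) (l', v') ∧ w' = vstar G.flow l' v' := by
  simp only [semantics_trans_iff]
  constructor
  · rintro ⟨_, ⟨e, he, rfl⟩, rfl, hact, rfl, henabled, rfl⟩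
    rw [← vstar_elapse] at henabled ⊢
    exact ⟨_, ⟨e, he, rfl, hact, rfl, (G.stopwatchEdge_enabled_vstar_iff e _).mp henabled, rfl⟩,
      G.stopwatchEdge_reset_vstar he _⟩
  · rintro ⟨_, ⟨e, he, rfl, hact, rfl, henabled, rfl⟩, rfl⟩
    refine ⟨stopwatchEdge G e, ⟨e, he, rfl⟩, rfl, hact, rfl, ?_, ?_⟩ <;>
      rw [← vstar_elapse]
    · exact (G.stopwatchEdge_enabled_vstar_iff e _).mpr henabled
    · exact (G.stopwatchEdge_reset_vstar he _).symm

end ISRGame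

theorem singular_to_stopwatch_forward_general {L X Act Obs : Type}
    (G : ISRGame L X Act Obs) :
    Simulates (ISRGame.semantics G) (ISRGame.semantics (stopwatchOf G)) (gamma1 G) := by
  refine ⟨⟨?_, ?_, ?_, ?_⟩, rfl, ?_⟩
  · rintro ⟨l, v⟩ ⟨l₂, w⟩ ⟨hl, -⟩
    exact congrArg G.lbl hl.symm
  · rintro ⟨l, v⟩ ⟨l₂, w⟩ ⟨hl, -⟩
    exact Iff.of_eq (congrArg G.isL1 hl.symm)
  · rintro ⟨l, v⟩ ⟨l₂, w⟩ hpq - ⟨a, t⟩ ⟨l', v'⟩ htrans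
    obtain ⟨rfl, rfl⟩ : l₂ = l ∧ w = vstar G.flow l v := hpq
    exact ⟨(a, t), (l', vstar G.flow l' v'),
      G.stopwatchOf_trans_vstar_iff.mpr ⟨v', htrans, rfl⟩, rfl, rfl⟩
  · rintro ⟨l, v⟩ ⟨l₂, w⟩ hpq - ⟨a, t⟩ ⟨l', w'⟩ htrans
    obtain ⟨rfl, rfl⟩ : l₂ = l ∧ w = vstar G.flow l v := hpq
    obtain ⟨v', hsingular, rfl⟩ := G.stopwatchOf_trans_vstar_iff.mp htrans
    exact ⟨(a, t), (l', v'), hsingular, rfl, rfl⟩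
  · funext x
    simp [ISRGame.semantics, vstar]

/-- **From singular to stopwatch, forward simulation.** For every initialized
singular game `G_S`, the map `γ1 (l,v) = (l,v*)` (where `v* x = v x / flow l x`
if `flow l x ≠ 0` and `v* x = v x` otherwise) is an alternating simulation
witnessing `T(G_S) ≼ T(G_W)`, `G_W` being the stopwatch game obtained from
`G_S` by flow normalization. -/
theorem singular_to_stopwatch_forward {L X Act Obs : Type}
    [Fintype L] [Fintype X] [Fintype Act] [Fintype Obs]
    (G : ISRGame L X Act Obs) (hE : G.E.Finite) :
    Simulates (ISRGame.semantics G) (ISRGame.semantics (stopwatchOf G)) (gamma1 G) :=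
  singular_to_stopwatch_forward_general G
end

section
/- From stopwatch to reset-annotated stopwatch, forward simulation: Let G_W be an initialized stopwatch game and let Ḡ_W be the reset-annotated stopwatch game obtained from G_W. Then the relation β1 = {((l,v), ((l,f_l),v)) : (l,v) ∈ Q(G_W), f_l : X → K ∪ {⊥}} between configurations of G_W and configurations of Ḡ_W with the same location component and the same valuation is an alternating simulation witnessing T(G_W) ≼ T(Ḡ_W). -/
/-- The reset-annotated stopwatch game `Ḡ_W` obtained from a stopwatch game
`G_W`: locations are pairs `(l, f)` where `f : X → ℚ ∪ {⊥}` records, for the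
stopped variables, the constant to which they were last reset; the initial
annotation is the constant function `0`; flows and labels are inherited; and
there is an edge `((l1,f1), a, φ, rst, (l2,f2))` whenever `(l1,a,φ,rst,l2)` is
an edge of `G_W` and, for every variable `x`: `f2 x = ⊥` if `flow l2 x = 1`;
`f2 x = rst x` if `flow l2 x = 0` and `rst x ≠ ⊥`; and `f2 x = f1 x` if
`flow l2 x = 0` and `rst x = ⊥`. -/
def annotateOf {L X Act Obs : Type} (G : ISRGame L X Act Obs) :
    ISRGame (L × (X → Option ℚ)) X Act Obs where
  isL1 := fun l => G.isL1 l.1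
  l0 := (G.l0, fun _ => some 0)
  l0_p1 := G.l0_p1
  lbl := fun l => G.lbl l.1
  flow := fun l x => G.flow l.1 x
  E := { eb | ∃ e ∈ G.E, eb.src.1 = e.src ∧ eb.tgt.1 = e.tgt ∧ eb.act = e.act ∧
        eb.lo = e.lo ∧ eb.hi = e.hi ∧ eb.rst = e.rst ∧
        ∀ x, (G.flow e.tgt x = 1 → eb.tgt.2 x = none) ∧
             (G.flow e.tgt x = 0 → e.rst x ≠ none → eb.tgt.2 x = e.rst x) ∧
             (G.flow e.tgt x = 0 → e.rst x = none → eb.tgt.2 x = eb.src.2 x) }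
  initialized := by
    rintro eb ⟨e, he, hsrc, htgt, hact, hlo, hhi, hrst, hf⟩ x hx
    try simp only at hx
    rw [hsrc, htgt] at hx
    rw [hrst]
    exact G.initialized e he x hx

/-- The relation `β1` pairing each configuration `(l,v)` of `T(G_W)` with every
configuration `((l,f),v)` of `T(Ḡ_W)` carrying the same location and the same
valuation. -/
def beta1 {L X Act Obs : Type} (G : ISRGame L X Act Obs) :
    (ISRGame.semantics G).Conf → (ISRGame.semantics (annotateOf G)).Conf → Prop :=
  fun p q => q.1.1 = p.1 ∧ q.2 = p.2

/-!
The annotation `f` of a location of `Ḡ_W` never constrains a move: it only records the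
constant at which each stopped variable was last reset, and every edge of `G_W` lifts to
an edge of `Ḡ_W` from any annotation, with the same guard and reset and with the target
annotation computed from the edge. Hence forgetting the annotation maps transitions of
`T(Ḡ_W)` to transitions of `T(G_W)`, and conversely every transition of `T(G_W)` lifts
from any annotation, which gives both clauses of the alternating simulation.
-/

namespace ISRGame

variable {L X Act Obs : Type} (G : ISRGame L X Act Obs)

def annotatedEdge (e : EdgeData L X Act) (f : X → Option ℚ) :
    EdgeData (L × (X → Option ℚ)) X Act where
  src := (e.src, f)
  act := e.act
  lo := e.lo
  hi := e.hi
  rst := e.rst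
  tgt := (e.tgt, fun x => if G.flow e.tgt x = 1 then none else (e.rst x).or (f x))

theorem annotatedEdge_mem {e : EdgeData L X Act} (he : e ∈ G.E) (f : X → Option ℚ) :
    G.annotatedEdge e f ∈ (annotateOf G).E := by
  refine ⟨e, he, rfl, rfl, rfl, rfl, rfl, rfl, fun x => ⟨?_, ?_, ?_⟩⟩
  · intro h1
    simp [annotatedEdge, h1]
  · intro h0 hrst
    obtain ⟨r, hr⟩ := Option.ne_none_iff_exists'.mp hrst
    simp [annotatedEdge, h0, hr]
  · intro h0 hrst
    simp [annotatedEdge, h0, hrst]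

theorem semantics_trans_of_annotateOf {l l' : L} {f f' : X → Option ℚ} {v v' : X → ℝ}
    {m : Act × NNReal}
    (h : (annotateOf G).semantics.trans ((l, f), v) m ((l', f'), v')) :
    G.semantics.trans (l, v) m (l', v') := by
  obtain ⟨⟨src, act, lo, hi, rst, tgt⟩, ⟨e, he, hsrc, htgt, rfl, rfl, rfl, rfl, -⟩,
    rfl, hact, rfl, hguard, hreset⟩ := h
  subst hsrc htgt
  exact ⟨e, he, rfl, hact, rfl, hguard, hreset⟩

theorem exists_annotateOf_semantics_trans {l l' : L} {v v' : X → ℝ} {m : Act × NNReal}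
    (h : G.semantics.trans (l, v) m (l', v')) (f : X → Option ℚ) :
    ∃ f', (annotateOf G).semantics.trans ((l, f), v) m ((l', f'), v') := by
  obtain ⟨e, he, hsrc, hact, htgt, hguard, hreset⟩ := h
  subst hsrc htgt
  exact ⟨_, G.annotatedEdge e f, G.annotatedEdge_mem he f, rfl, hact, rfl, hguard, hreset⟩

end ISRGame

theorem stopwatch_to_annotated_forward_general {L X Act Obs : Type}
    (G : ISRGame L X Act Obs) :
    Simulates (ISRGame.semantics G) (ISRGame.semantics (annotateOf G)) (beta1 G) := by
  refine ⟨⟨?_, ?_, ?_, ?_⟩, rfl, rfl⟩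
  · rintro _ _ ⟨hl, -⟩
    exact congrArg G.lbl hl.symm
  · rintro _ _ ⟨hl, -⟩
    exact Iff.of_eq (congrArg G.isL1 hl.symm)
  · rintro ⟨l, v⟩ ⟨⟨_, f⟩, _⟩ ⟨rfl, rfl⟩ - m ⟨l', v'⟩ h
    obtain ⟨f', h'⟩ := G.exists_annotateOf_semantics_trans h f
    exact ⟨m, ((l', f'), v'), h', rfl, rfl⟩
  · rintro ⟨l, v⟩ ⟨⟨_, f⟩, _⟩ ⟨rfl, rfl⟩ - m ⟨⟨l', f'⟩, v'⟩ h
    exact ⟨m, (l', v'), G.semantics_trans_of_annotateOf h, rfl, rfl⟩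

/-- **From stopwatch to reset-annotated stopwatch, forward simulation.** For
every initialized stopwatch game `G_W` (an ISR game all of whose flows are `0`
or `1`), the relation `β1` pairing `(l, v)` with the configurations
`((l, f), v)` of the reset-annotated game `Ḡ_W` is an alternating simulation
witnessing `T(G_W) ≼ T(Ḡ_W)`. -/
theorem stopwatch_to_annotated_forward {L X Act Obs : Type}
    [Fintype L] [Fintype X] [Fintype Act] [Fintype Obs]
    (G : ISRGame L X Act Obs) (hE : G.E.Finite)
    (hsw : ∀ l x, G.flow l x = 0 ∨ G.flow l x = 1) :
    Simulates (ISRGame.semantics G) (ISRGame.semantics (annotateOf G)) (beta1 G) :=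
  stopwatch_to_annotated_forward_general G
end

section
/- From reset-annotated stopwatch back to stopwatch, backward simulation: Let G_W be an initialized stopwatch game and let Ḡ_W be the reset-annotated stopwatch game obtained from G_W. Then the relation β1⁻¹ = {(((l,f_l),v), (l,v)) : ((l,f_l),v) ∈ Q(Ḡ_W)} is an alternating simulation witnessing T(Ḡ_W) ≼ T(G_W); consequently T(G_W) and T(Ḡ_W) are alternating bisimilar. -/
/-- `T(G1)` and `T(G2)` are alternating bisimilar: some relation `R` witnesses
`T(G1) ≼ T(G2)` and its inverse `R⁻¹` witnesses `T(G2) ≼ T(G1)`. -/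
def Bisimilar {Obs : Type} (G1 G2 : TBGame Obs) : Prop :=
  ∃ R : G1.Conf → G2.Conf → Prop,
    Simulates G1 G2 R ∧ Simulates G2 G1 (fun q p => R p q)

/-! Forgetting the annotation turns every transition of `Ḡ_W` into one of `G_W` with the same
move, and conversely every edge of `G_W` lifts, from any source annotation, to an annotated edge
whose target annotation is computed from the flows and resets. Hence `β1` matches transitions in
both directions whoever owns the configuration, which makes both `β1` and `β1⁻¹` alternating
simulations. -/

section AltSim

variable {Obs : Type} {G₁ G₂ : TBGame Obs} (R : G₁.Conf → G₂.Conf → Prop)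

theorem simulates_and_inverse_of_forth_back
    (hlbl : ∀ p q, R p q → G₁.lbl p = G₂.lbl q)
    (hP1 : ∀ p q, R p q → (G₁.isP1 p ↔ G₂.isP1 q))
    (hinit : R G₁.init G₂.init)
    (forth : ∀ p q, R p q → ∀ m p', G₁.trans p m p' → ∃ m' q', G₂.trans q m' q' ∧ R p' q')
    (back : ∀ p q, R p q → ∀ m' q', G₂.trans q m' q' → ∃ m p', G₁.trans p m p' ∧ R p' q') :
    Simulates G₁ G₂ R ∧ Simulates G₂ G₁ (fun q p => R p q) :=
  ⟨⟨⟨hlbl, hP1, fun p q h _ => forth p q h, fun p q h _ => back p q h⟩, hinit⟩,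
    ⟨⟨fun q p h => (hlbl p q h).symm, fun q p h => (hP1 p q h).symm,
      fun q p h _ => back p q h, fun q p h _ => forth p q h⟩, hinit⟩⟩

end AltSim

namespace ISRGame

variable {L X Act Obs : Type} (G : ISRGame L X Act Obs)

def nextAnnotation (e : EdgeData L X Act) (f₁ : X → Option ℚ) : X → Option ℚ :=
  fun x => if G.flow e.tgt x = 1 then none else (e.rst x).or (f₁ x)

theorem annotatedEdge_mem_annotateOf {e : EdgeData L X Act} (he : e ∈ G.E)
    (f₁ : X → Option ℚ) :
    (⟨(e.src, f₁), e.act, e.lo, e.hi, e.rst, (e.tgt, G.nextAnnotation e f₁)⟩ :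
      EdgeData _ X Act) ∈ (annotateOf G).E := by
  refine ⟨e, he, rfl, rfl, rfl, rfl, rfl, rfl,
    fun x => ⟨fun h1 => ?_, fun h0 hr => ?_, fun h0 hr => ?_⟩⟩
  · simp [nextAnnotation, h1]
  · obtain ⟨r, hr⟩ := Option.ne_none_iff_exists'.mp hr
    simp [nextAnnotation, h0, hr]
  · simp [nextAnnotation, h0, hr]

theorem semantics_trans_of_annotateOf_s6 {q q' : (annotateOf G).semantics.Conf} {m : Act × NNReal}
    (h : (annotateOf G).semantics.trans q m q') :
    G.semantics.trans (q.1.1, q.2) m (q'.1.1, q'.2) := by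
  obtain ⟨eb, ⟨e, he, hsrc, htgt, hact, hlo, hhi, hrst, -⟩, hs, ha, ht, hguard, hreset⟩ := h
  refine ⟨e, he, by rw [← hsrc, hs], by rw [← hact, ha], by rw [← htgt, ht], ?_, ?_⟩
  · exact hlo ▸ hhi ▸ hguard
  · exact hrst ▸ hreset

theorem exists_annotateOf_trans {p p' : G.semantics.Conf} {m : Act × NNReal}
    (h : G.semantics.trans p m p') (f₁ : X → Option ℚ) :
    ∃ f₂, (annotateOf G).semantics.trans ((p.1, f₁), p.2) m ((p'.1, f₂), p'.2) := by
  obtain ⟨e, he, hs, ha, ht, hguard, hreset⟩ := h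
  exact ⟨G.nextAnnotation e f₁, _, G.annotatedEdge_mem_annotateOf he f₁, by rw [hs], ha,
    by rw [ht], hguard, hreset⟩

end ISRGame

theorem annotated_to_stopwatch_backward_general {L X Act Obs : Type}
    (G : ISRGame L X Act Obs) :
    Simulates (ISRGame.semantics (annotateOf G)) (ISRGame.semantics G)
      (fun q p => beta1 G p q) ∧
    Bisimilar (ISRGame.semantics G) (ISRGame.semantics (annotateOf G)) := by
  have h := simulates_and_inverse_of_forth_back (beta1 G)
    (fun _ _ h => congrArg G.lbl h.1.symm) (fun _ _ h => iff_of_eq (congrArg G.isL1 h.1.symm))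
    ⟨rfl, rfl⟩
    (by
      rintro ⟨_, _⟩ ⟨⟨_, f⟩, _⟩ ⟨rfl, rfl⟩ m p' hp
      obtain ⟨f', hq⟩ := G.exists_annotateOf_trans hp f
      exact ⟨m, _, hq, rfl, rfl⟩)
    (by
      rintro ⟨_, _⟩ ⟨⟨_, f⟩, _⟩ ⟨rfl, rfl⟩ m q' hq
      exact ⟨m, _, G.semantics_trans_of_annotateOf_s6 hq, rfl, rfl⟩)
  exact ⟨h.2, _, h⟩

/-- **From reset-annotated stopwatch back to stopwatch, backward simulation.**
For every initialized stopwatch game `G_W` with reset-annotated version `Ḡ_W`,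
the inverse relation `β1⁻¹ = {(((l,f),v), (l,v))}` is an alternating simulation
witnessing `T(Ḡ_W) ≼ T(G_W)`; consequently `T(G_W)` and `T(Ḡ_W)` are
alternating bisimilar. -/
theorem annotated_to_stopwatch_backward {L X Act Obs : Type}
    [Fintype L] [Fintype X] [Fintype Act] [Fintype Obs]
    (G : ISRGame L X Act Obs) (hE : G.E.Finite)
    (hsw : ∀ l x, G.flow l x = 0 ∨ G.flow l x = 1) :
    Simulates (ISRGame.semantics (annotateOf G)) (ISRGame.semantics G)
      (fun q p => beta1 G p q) ∧
    Bisimilar (ISRGame.semantics G) (ISRGame.semantics (annotateOf G)) :=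
  annotated_to_stopwatch_backward_general G
end

section
/- From updatable timed to timed, forward simulation: Let G_U be an updatable timed game and let G_T be the timed game obtained from G_U by the offset construction. Then the relation γ2 = {((l,v), ((l,g_l), v^t)) : (l,v) ∈ Q(G_U), g_l : X → K_U, and v^t(x) = v(x) − g_l(x) for all x ∈ X} is an alternating simulation witnessing T(G_U) ≼ T(G_T). -/
/-- The timed game `G_T` obtained from an updatable timed game `G_U` by the
offset construction: locations are pairs `(l, g)` where `g : X → ℚ` records an
offset for each clock, the initial offset being `0`; for every edge
`e = (l1, a, φ_e, rst_e, l2)` of `G_U` and every offset `g1` there is an edge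
from `(l1, g1)` to `(l2, g2)` whose constraint is `φ_e x − g1 x` for every `x`,
which resets (to `0`) exactly the clocks `x` with `rst_e x ≠ ⊥`, and where
`g2 x = rst_e x` when `rst_e x ≠ ⊥` and `g2 x = g1 x` otherwise. -/
def timedOf {L X Act Obs : Type} (G : ISRGame L X Act Obs) :
    ISRGame (L × (X → ℚ)) X Act Obs where
  isL1 := fun l => G.isL1 l.1
  l0 := (G.l0, fun _ => 0)
  l0_p1 := G.l0_p1
  lbl := fun l => G.lbl l.1
  flow := fun _ _ => 1
  E := { et | ∃ e ∈ G.E, et.src.1 = e.src ∧ et.tgt.1 = e.tgt ∧ et.act = e.act ∧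
        (∀ x, et.lo x = e.lo x - et.src.2 x ∧ et.hi x = e.hi x - et.src.2 x) ∧
        (∀ x, et.rst x = (e.rst x).map (fun _ => (0 : ℚ))) ∧
        (∀ x, et.tgt.2 x = (e.rst x).getD (et.src.2 x)) }
  initialized := by
    rintro et het x hx
    exact absurd rfl hx

/-- The relation `γ2` pairing a configuration `(l, v)` of `T(G_U)` with every
configuration `((l, g), vᵗ)` of `T(G_T)` such that `vᵗ x = v x − g x` for all `x`. -/
def gamma2 {L X Act Obs : Type} (G : ISRGame L X Act Obs) :
    (ISRGame.semantics G).Conf → (ISRGame.semantics (timedOf G)).Conf → Prop :=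
  fun p q => q.1.1 = p.1 ∧ ∀ x, q.2 x = p.2 x - (q.1.2 x : ℝ)

/-!
An updatable clock with value `v x` is simulated by a plain clock with value `v x - g x`, the
offset `g x` being stored in the location. All flows being `1`, both clocks advance at the same
rate, so a guard on `v x` is the guard shifted by `g x` on the plain clock, and an update of `x`
to `r` becomes a reset to `0` together with the new offset `r`. Each transition of `T(G_U)` along
an edge `e` thus corresponds exactly to a transition of `T(G_T)` along the edge `eᵗ` leaving the
current offset.
-/

theorem offset_guard_iff (lo hi g : ℚ) (a t : ℝ) :
    ((lo - g : ℚ) : ℝ) ≤ a - g + t ∧ a - g + t ≤ ((hi - g : ℚ) : ℝ) ↔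
      (lo : ℝ) ≤ a + t ∧ a + t ≤ hi := by
  push_cast
  simp only [sub_add_eq_add_sub, sub_le_sub_iff_right]

theorem offset_update (o : Option ℚ) (a t : ℝ) (g : ℚ) :
    (o.map fun _ => (0 : ℚ)).elim (a - g + t) (fun r => (r : ℝ)) =
      o.elim (a + t) (fun r => (r : ℝ)) - ((o.getD g : ℚ) : ℝ) := by
  cases o <;> simp [sub_add_eq_add_sub]

namespace ISRGame

variable {L X Act Obs : Type}

theorem trans_iff_of_flow_eq_one (G : ISRGame L X Act Obs) (hflow : ∀ l x, G.flow l x = 1)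
    {c c' : L × (X → ℝ)} {m : Act × NNReal} :
    G.semantics.trans c m c' ↔ ∃ e ∈ G.E, e.src = c.1 ∧ e.act = m.1 ∧ e.tgt = c'.1 ∧
      (∀ x, (e.lo x : ℝ) ≤ c.2 x + m.2 ∧ c.2 x + m.2 ≤ (e.hi x : ℝ)) ∧
      ∀ x, c'.2 x = (e.rst x).elim (c.2 x + m.2) (fun r => (r : ℝ)) := by
  simp only [semantics, hflow, Rat.cast_one, mul_one]

/-- The edge `eᵗ` of `G_T` that `e` induces from the location `(e.src, g)`. -/
def offsetEdge (e : EdgeData L X Act) (g : X → ℚ) : EdgeData (L × (X → ℚ)) X Act where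
  src := (e.src, g)
  act := e.act
  lo x := e.lo x - g x
  hi x := e.hi x - g x
  rst x := (e.rst x).map fun _ => 0
  tgt := (e.tgt, fun x => (e.rst x).getD (g x))

theorem offsetEdge_mem_timedOf {G : ISRGame L X Act Obs} {e : EdgeData L X Act} (he : e ∈ G.E)
    (g : X → ℚ) : offsetEdge e g ∈ (timedOf G).E :=
  ⟨e, he, rfl, rfl, rfl, fun _ => ⟨rfl, rfl⟩, fun _ => rfl, fun _ => rfl⟩

theorem exists_eq_offsetEdge_of_mem_timedOf {G : ISRGame L X Act Obs}
    {et : EdgeData (L × (X → ℚ)) X Act} (het : et ∈ (timedOf G).E) :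
    ∃ e ∈ G.E, ∃ g, et = offsetEdge e g := by
  obtain ⟨e, he, hsrc, htgt, hact, hguard, hrst, hoff⟩ := het
  refine ⟨e, he, et.src.2, ?_⟩
  obtain ⟨⟨l, g⟩, a, lo, hi, rst, ⟨l', g'⟩⟩ := et
  dsimp only at hsrc htgt hact hguard hrst hoff
  subst hsrc htgt hact
  simp only [offsetEdge, EdgeData.mk.injEq, Prod.mk.injEq, true_and]
  exact ⟨funext fun x => (hguard x).1, funext fun x => (hguard x).2, funext hrst, funext hoff⟩

variable {G : ISRGame L X Act Obs} (hflow : ∀ l x, G.flow l x = 1)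
include hflow

theorem gamma2_forward {p p' : L × (X → ℝ)} {q : (L × (X → ℚ)) × (X → ℝ)}
    (hpq : gamma2 G p q) {m : Act × NNReal} (h : G.semantics.trans p m p') :
    ∃ q', (timedOf G).semantics.trans q m q' ∧ gamma2 G p' q' := by
  obtain ⟨l, v⟩ := p
  obtain ⟨⟨_, g⟩, vt⟩ := q
  obtain ⟨rfl, hv⟩ := hpq
  obtain rfl : vt = fun x => v x - g x := funext hv
  obtain ⟨e, he, hsrc, hact, htgt, hguard, hupd⟩ := (trans_iff_of_flow_eq_one G hflow).1 h
  refine ⟨((offsetEdge e g).tgt,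
      fun x => ((offsetEdge e g).rst x).elim (v x - g x + m.2) (fun r => (r : ℝ))),
    (trans_iff_of_flow_eq_one _ fun _ _ => rfl).2 ⟨offsetEdge e g, offsetEdge_mem_timedOf he g,
      by rw [offsetEdge, hsrc], hact, rfl, fun x => ?_, fun _ => rfl⟩,
    htgt, fun x => ?_⟩
  · exact (offset_guard_iff _ _ _ _ _).2 (hguard x)
  · rw [hupd x]
    exact offset_update _ _ _ _

theorem gamma2_backward {p : L × (X → ℝ)} {q q' : (L × (X → ℚ)) × (X → ℝ)}
    (hpq : gamma2 G p q) {m : Act × NNReal} (h : (timedOf G).semantics.trans q m q') :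
    ∃ p', G.semantics.trans p m p' ∧ gamma2 G p' q' := by
  obtain ⟨l, v⟩ := p
  obtain ⟨⟨_, g⟩, vt⟩ := q
  obtain ⟨rfl, hv⟩ := hpq
  obtain rfl : vt = fun x => v x - g x := funext hv
  obtain ⟨et, het, hsrc, hact, htgt, hguard, hupd⟩ :=
    (trans_iff_of_flow_eq_one _ fun _ _ => rfl).1 h
  obtain ⟨e, he, g₀, rfl⟩ := exists_eq_offsetEdge_of_mem_timedOf het
  obtain ⟨hl, rfl⟩ := Prod.mk.inj hsrc
  refine ⟨(e.tgt, fun x => (e.rst x).elim (v x + m.2) (fun r => (r : ℝ))),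
    (trans_iff_of_flow_eq_one G hflow).2 ⟨e, he, hl, hact, rfl, fun x => ?_, fun _ => rfl⟩,
    congrArg Prod.fst htgt.symm, fun x => ?_⟩
  · exact (offset_guard_iff _ _ _ _ _).1 (hguard x)
  · rw [hupd x, ← htgt]
    exact offset_update _ _ _ _

end ISRGame

theorem updatable_to_timed_forward_general {L X Act Obs : Type}
    (G : ISRGame L X Act Obs)
    (hflow : ∀ l x, G.flow l x = 1) :
    Simulates (ISRGame.semantics G) (ISRGame.semantics (timedOf G)) (gamma2 G) := by
  refine ⟨⟨?_, ?_, ?_, ?_⟩, rfl, fun _ => ?_⟩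
  · rintro p q ⟨hl, -⟩
    exact congrArg G.lbl hl.symm
  · rintro p q ⟨hl, -⟩
    exact iff_of_eq (congrArg G.isL1 hl.symm)
  · intro p q hpq _ m p' h
    exact ⟨m, ISRGame.gamma2_forward hflow hpq h⟩
  · intro p q hpq _ m q' h
    obtain ⟨p', hp', hpq'⟩ := ISRGame.gamma2_backward hflow hpq h
    exact ⟨m, p', hp', hpq'⟩
  · simp [ISRGame.semantics, timedOf]

/-- **From updatable timed to timed, forward simulation.** For every updatable
timed game `G_U` (an ISR game all of whose flows are `1`) and the timed game
`G_T` obtained from it by the offset construction, the relation `γ2` pairing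
`(l, v)` with the configurations `((l, g), vᵗ)` such that `vᵗ x = v x − g x`
for all `x` is an alternating simulation witnessing `T(G_U) ≼ T(G_T)`. -/
theorem updatable_to_timed_forward {L X Act Obs : Type}
    [Fintype L] [Fintype X] [Fintype Act] [Fintype Obs]
    (G : ISRGame L X Act Obs) (hE : G.E.Finite)
    (hflow : ∀ l x, G.flow l x = 1) :
    Simulates (ISRGame.semantics G) (ISRGame.semantics (timedOf G)) (gamma2 G) :=
  updatable_to_timed_forward_general G hflow
end

section
/- From timed back to updatable timed, backward simulation: Let G_U be an updatable timed game and let G_T be the timed game obtained from G_U by the offset construction. Then the relation γ2⁻¹ = {(((l,g_l), v^t), (l,v)) : ((l,g_l),v^t) ∈ Q(G_T) and v(x) = v^t(x) + g_l(x) for all x ∈ X} is an alternating simulation witnessing T(G_T) ≼ T(G_U); consequently T(G_U) and T(G_T) are alternating bisimilar. -/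
/-! The offset construction stores the value `v x` of a variable of `G_U` as the pair of a
clock `vᵗ x` and a discrete offset `g x` with `v x = vᵗ x + g x`: an update `x := r` becomes a
reset of the clock together with the offset change `g x := r`, and a guard `v x ∈ [lo, hi]`
becomes `vᵗ x ∈ [lo - g x, hi - g x]`. Forgetting the offset, `((l, g), vᵗ) ↦ (l, vᵗ + g)`,
therefore maps every transition of `T(G_T)` to one of `T(G_U)` with the same move, and every
transition of `T(G_U)` from the image of a configuration lifts back along the edge of `G_T`
induced by the same edge of `G_U` at the current offset. A functional relation with both transfer properties, which
preserves owners and labels, is an alternating bisimulation in both directions. -/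

section Bisimulation

variable {Obs : Type} {G₁ G₂ : TBGame Obs}

/-- Unlike `IsAltSim`, transitions are matched on both sides from configurations of either
player. -/
def IsBisim (G₁ G₂ : TBGame Obs) (R : G₁.Conf → G₂.Conf → Prop) : Prop :=
  (∀ p q, R p q → G₁.lbl p = G₂.lbl q) ∧
  (∀ p q, R p q → (G₁.isP1 p ↔ G₂.isP1 q)) ∧
  (∀ p q, R p q → ∀ m p', G₁.trans p m p' → ∃ m' q', G₂.trans q m' q' ∧ R p' q') ∧
  (∀ p q, R p q → ∀ m' q', G₂.trans q m' q' → ∃ m p', G₁.trans p m p' ∧ R p' q')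

theorem IsBisim.isAltSim {R : G₁.Conf → G₂.Conf → Prop} (h : IsBisim G₁ G₂ R) :
    IsAltSim G₁ G₂ R :=
  ⟨h.1, h.2.1, fun p q hR _ => h.2.2.1 p q hR, fun p q hR _ => h.2.2.2 p q hR⟩

theorem IsBisim.symm {R : G₁.Conf → G₂.Conf → Prop} (h : IsBisim G₁ G₂ R) :
    IsBisim G₂ G₁ (fun q p => R p q) :=
  ⟨fun q p hR => (h.1 p q hR).symm, fun q p hR => (h.2.1 p q hR).symm,
    fun q p hR => h.2.2.2 p q hR, fun q p hR => h.2.2.1 p q hR⟩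

theorem IsBisim.bisimilar {R : G₁.Conf → G₂.Conf → Prop} (h : IsBisim G₁ G₂ R)
    (hinit : R G₁.init G₂.init) : Bisimilar G₁ G₂ :=
  ⟨R, ⟨h.isAltSim, hinit⟩, ⟨h.symm.isAltSim, hinit⟩⟩

theorem isBisim_graph (f : G₁.Conf → G₂.Conf) (hlbl : ∀ p, G₂.lbl (f p) = G₁.lbl p)
    (hP1 : ∀ p, G₂.isP1 (f p) ↔ G₁.isP1 p)
    (hforth : ∀ p m p', G₁.trans p m p' → ∃ m', G₂.trans (f p) m' (f p'))
    (hback : ∀ p m' q', G₂.trans (f p) m' q' → ∃ m p', G₁.trans p m p' ∧ f p' = q') :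
    IsBisim G₁ G₂ (fun p q => q = f p) := by
  refine ⟨?_, ?_, ?_, ?_⟩
  · rintro p _ rfl
    exact (hlbl p).symm
  · rintro p _ rfl
    exact (hP1 p).symm
  · rintro p _ rfl m p' hp
    obtain ⟨m', hq⟩ := hforth p m p' hp
    exact ⟨m', f p', hq, rfl⟩
  · rintro p _ rfl m' q' hq
    obtain ⟨m, p', hp, rfl⟩ := hback p m' q' hq
    exact ⟨m, p', hp, rfl⟩

end Bisimulation

section Offset

variable {L X Act Obs : Type}

/-- The edge `eᵗ` of `G_T` at source offset `g`. -/
def EdgeData.withOffset (e : EdgeData L X Act) (g : X → ℚ) : EdgeData (L × (X → ℚ)) X Act where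
  src := (e.src, g)
  act := e.act
  lo x := e.lo x - g x
  hi x := e.hi x - g x
  rst x := (e.rst x).map fun _ => 0
  tgt := (e.tgt, fun x => (e.rst x).getD (g x))

theorem mem_timedOf_E_iff {G : ISRGame L X Act Obs} {et : EdgeData (L × (X → ℚ)) X Act} :
    et ∈ (timedOf G).E ↔ ∃ e ∈ G.E, ∃ g, et = e.withOffset g := by
  constructor
  · rintro ⟨e, he, hsrc, htgt, hact, hbounds, hrst, hoff⟩
    obtain ⟨⟨l, g⟩, a, lo, hi, rst, ⟨l', g'⟩⟩ := et
    simp only at hsrc htgt hact hbounds hrst hoff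
    subst hsrc htgt hact
    refine ⟨e, he, g, ?_⟩
    simp only [EdgeData.withOffset, EdgeData.mk.injEq, Prod.mk.injEq, true_and]
    exact ⟨funext fun x => (hbounds x).1, funext fun x => (hbounds x).2, funext hrst,
      funext hoff⟩
  · rintro ⟨e, he, g, rfl⟩
    exact ⟨e, he, rfl, rfl, rfl, fun _ => ⟨rfl, rfl⟩, fun _ => rfl, fun _ => rfl⟩

def forgetOffset (q : (L × (X → ℚ)) × (X → ℝ)) : L × (X → ℝ) :=
  (q.1.1, fun x => q.2 x + q.1.2 x)

theorem guard_withOffset_iff (lo hi g : ℚ) (v t : ℝ) :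
    ((lo - g : ℚ) : ℝ) ≤ v + t ∧ v + t ≤ ((hi - g : ℚ) : ℝ) ↔
      (lo : ℝ) ≤ v + g + t ∧ v + g + t ≤ hi := by
  push_cast
  constructor <;> rintro ⟨h₁, h₂⟩ <;> constructor <;> linarith

theorem update_eq_reset_add_offset (o : Option ℚ) (g : ℚ) (v t : ℝ) :
    o.elim (v + g + t) (fun r => (r : ℝ)) =
      (o.map fun _ => (0 : ℚ)).elim (v + t) (fun r => (r : ℝ)) + ((o.getD g : ℚ) : ℝ) := by
  cases o <;> simp only [Option.elim_none, Option.elim_some, Option.map_none, Option.map_some,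
    Option.getD_none, Option.getD_some, Rat.cast_zero, zero_add]
  ring

variable {G : ISRGame L X Act Obs}

theorem semantics_trans_forgetOffset (hflow : ∀ l x, G.flow l x = 1)
    {q q' : (timedOf G).semantics.Conf} {m : Act × NNReal}
    (h : (timedOf G).semantics.trans q m q') :
    G.semantics.trans (forgetOffset q) m (forgetOffset q') := by
  obtain ⟨_, hedge, hsrc, hact, htgt, hguard, hval⟩ := h
  obtain ⟨e, he, g, rfl⟩ := mem_timedOf_E_iff.mp hedge
  obtain ⟨⟨l, g⟩, v⟩ := q
  obtain ⟨⟨l', g'⟩, v'⟩ := q'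
  simp only [EdgeData.withOffset, Prod.mk.injEq] at hsrc htgt
  obtain ⟨rfl, rfl⟩ := hsrc
  obtain ⟨rfl, rfl⟩ := htgt
  refine ⟨e, he, rfl, hact, rfl, fun x => ?_, fun x => ?_⟩
  · have hx := hguard x
    simp only [EdgeData.withOffset, timedOf, Rat.cast_one, mul_one] at hx
    simpa [forgetOffset, hflow] using (guard_withOffset_iff _ _ _ _ _).mp hx
  · have hx := hval x
    simp only [EdgeData.withOffset, timedOf, Rat.cast_one, mul_one] at hx
    simp only [forgetOffset, hflow, Rat.cast_one, mul_one]
    rw [hx, update_eq_reset_add_offset]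

theorem exists_semantics_trans_of_forgetOffset (hflow : ∀ l x, G.flow l x = 1)
    {q : (timedOf G).semantics.Conf} {m : Act × NNReal} {p' : G.semantics.Conf}
    (h : G.semantics.trans (forgetOffset q) m p') :
    ∃ q', (timedOf G).semantics.trans q m q' ∧ forgetOffset q' = p' := by
  obtain ⟨e, he, hsrc, hact, htgt, hguard, hval⟩ := h
  obtain ⟨⟨l, g⟩, v⟩ := q
  obtain ⟨l', v'⟩ := p'
  simp only [forgetOffset, hflow, Rat.cast_one, mul_one] at hsrc htgt hguard hval
  subst hsrc htgt
  let et := e.withOffset g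
  refine ⟨(et.tgt, fun x => (et.rst x).elim (v x + m.2) fun r => (r : ℝ)),
    ⟨et, mem_timedOf_E_iff.mpr ⟨e, he, g, rfl⟩, rfl, hact, rfl, fun x => ?_, fun x => ?_⟩, ?_⟩
  · simpa [et, EdgeData.withOffset, timedOf] using
      (guard_withOffset_iff _ _ _ _ _).mpr (hguard x)
  · simp [et, timedOf]
  · refine Prod.ext rfl (funext fun x => ?_)
    simp only [et, EdgeData.withOffset, forgetOffset, hval, update_eq_reset_add_offset]

theorem isBisim_forgetOffset (hflow : ∀ l x, G.flow l x = 1) :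
    IsBisim (timedOf G).semantics G.semantics (fun q p => p = forgetOffset q) :=
  isBisim_graph (G₁ := (timedOf G).semantics) (G₂ := G.semantics) forgetOffset
    (fun _ => rfl) (fun _ => Iff.rfl)
    (fun _ m _ h => ⟨m, semantics_trans_forgetOffset hflow h⟩)
    (fun _ m _ h => ⟨m, exists_semantics_trans_of_forgetOffset hflow h⟩)

end Offset

theorem timed_to_updatable_backward_general {L X Act Obs : Type}
    (G : ISRGame L X Act Obs)
    (hflow : ∀ l x, G.flow l x = 1) :
    Simulates (ISRGame.semantics (timedOf G)) (ISRGame.semantics G)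
      (fun q p => p.1 = q.1.1 ∧ ∀ x, p.2 x = q.2 x + (q.1.2 x : ℝ)) ∧
    Bisimilar (ISRGame.semantics G) (ISRGame.semantics (timedOf G)) := by
  have hrel : (fun (q : (timedOf G).semantics.Conf) (p : G.semantics.Conf) =>
      p.1 = q.1.1 ∧ ∀ x, p.2 x = q.2 x + (q.1.2 x : ℝ)) = fun q p => p = forgetOffset q := by
    ext q p
    exact ⟨fun h => Prod.ext h.1 (funext h.2), by rintro rfl; exact ⟨rfl, fun _ => rfl⟩⟩
  have hinit : G.semantics.init = forgetOffset (timedOf G).semantics.init := by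
    simp [forgetOffset, ISRGame.semantics, timedOf]
  rw [hrel]
  exact ⟨⟨(isBisim_forgetOffset hflow).isAltSim, hinit⟩,
    (isBisim_forgetOffset hflow).symm.bisimilar hinit⟩

/-- **From timed back to updatable timed, backward simulation.** For every
updatable timed game `G_U` with associated timed game `G_T`, the inverse
relation `γ2⁻¹ = {(((l,g), vᵗ), (l,v)) : v x = vᵗ x + g x for all x}` is an
alternating simulation witnessing `T(G_T) ≼ T(G_U)`; consequently `T(G_U)` and
`T(G_T)` are alternating bisimilar. -/
theorem timed_to_updatable_backward {L X Act Obs : Type}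
    [Fintype L] [Fintype X] [Fintype Act] [Fintype Obs]
    (G : ISRGame L X Act Obs) (hE : G.E.Finite)
    (hflow : ∀ l x, G.flow l x = 1) :
    Simulates (ISRGame.semantics (timedOf G)) (ISRGame.semantics G)
      (fun q p => p.1 = q.1.1 ∧ ∀ x, p.2 x = q.2 x + (q.1.2 x : ℝ)) ∧
    Bisimilar (ISRGame.semantics G) (ISRGame.semantics (timedOf G)) :=
  timed_to_updatable_backward_general G hflow
end

section
/- Well-definedness of matched transitions in the updatable-to-timed reduction: Let G_U be an updatable timed game and G_T the timed game obtained from it by the offset construction. For every configuration (l,v) of G_U related by γ2 to a configuration ((l,g_l),v^t) of G_T (i.e., v^t(x) = v(x) − g_l(x) for all x), and every move m = (a,t) with t ≥ 0 such that δ_U((l,v),m) = (l',v') is defined, the transition δ_T(((l,g_l),v^t),m) = ((l',g_{l'}),(v^t + t)[r := 0]) is defined along the corresponding edge, and the resulting pair of configurations is again related by γ2, i.e., (v^t+t)[r:=0](x) = v'(x) − g_{l'}(x) for all x ∈ X. -/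
namespace EdgeData

variable {L X Act : Type}

/-- The offsets `g_{l2}` reached along `e` from offsets `g_{l1} = g`. -/
def nextOffset (e : EdgeData L X Act) (g : X → ℚ) : X → ℚ :=
  fun x => (e.rst x).getD (g x)

/-- The edge `eᵗ` of `timedOf` induced by `e` at offsets `g`. -/
def offsetEdge (e : EdgeData L X Act) (g : X → ℚ) : EdgeData (L × (X → ℚ)) X Act where
  src := (e.src, g)
  act := e.act
  lo x := e.lo x - g x
  hi x := e.hi x - g x
  rst x := (e.rst x).map fun _ => 0
  tgt := (e.tgt, e.nextOffset g)

theorem offsetEdge_mem_timedOf {Obs : Type} {G : ISRGame L X Act Obs} {e : EdgeData L X Act}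
    (he : e ∈ G.E) (g : X → ℚ) : e.offsetEdge g ∈ (timedOf G).E :=
  ⟨e, he, rfl, rfl, rfl, fun _ => ⟨rfl, rfl⟩, fun _ => rfl, fun _ => rfl⟩

end EdgeData

/-- Resetting a clock to `0` instead of updating it to `r` is compensated by the new offset `r`;
without a reset the offset `c` is kept. -/
theorem Option.elim_map_zero_sub (o : Option ℚ) (a : ℝ) (c : ℚ) :
    (o.map fun _ => (0 : ℚ)).elim (a - c) (fun r => (r : ℝ)) =
      o.elim a (fun r => (r : ℝ)) - (o.getD c : ℝ) := by
  cases o <;> simp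

theorem timed_transition_well_defined_general {L X Act Obs : Type}
    (G : ISRGame L X Act Obs)
    (hflow : ∀ l x, G.flow l x = 1)
    (l : L) (v : X → ℝ) (g : X → ℚ) (vt : X → ℝ)
    (hvt : ∀ x, vt x = v x - (g x : ℝ))
    (m : Act × NNReal) (l' : L) (v' : X → ℝ)
    (h : (ISRGame.semantics G).trans (l, v) m (l', v')) :
    ∃ g' : X → ℚ,
      (ISRGame.semantics (timedOf G)).trans
        ((l, g), vt) m ((l', g'), fun x => v' x - (g' x : ℝ)) := by
  obtain ⟨e, he, rfl, hact, rfl, hguard, hupdate⟩ := h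
  refine ⟨e.nextOffset g, e.offsetEdge g, e.offsetEdge_mem_timedOf he g, rfl, hact, rfl,
    fun x => ?_, fun x => ?_⟩
  · obtain ⟨hlo, hhi⟩ := hguard x
    simp only [hflow] at hlo hhi
    simp only [EdgeData.offsetEdge, timedOf, hvt, Rat.cast_sub]
    constructor <;> linarith
  · have hshift : vt x + m.2 * 1 = (v x + m.2 * (G.flow e.src x : ℝ)) - g x := by
      rw [hvt, hflow, Rat.cast_one]; ring
    dsimp only [timedOf, EdgeData.offsetEdge, EdgeData.nextOffset] at hupdate ⊢
    rw [hupdate, Rat.cast_one, hshift, Option.elim_map_zero_sub]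

/-- **Well-definedness of matched transitions in the updatable-to-timed
reduction.** For every configuration `(l, v)` of the updatable timed game `G_U`
related by `γ2` to a configuration `((l, g), vᵗ)` of the timed game `G_T`
(i.e. `vᵗ x = v x − g x` for all `x`), and every move `m = (a, t)` with `t ≥ 0`
such that `δ_U((l,v), m) = (l', v')` is defined, the transition of `T(G_T)`
from `((l, g), vᵗ)` by `m` along the corresponding edge is defined, reaching
`((l', g'), (vᵗ + t)[r := 0])`, and the resulting pair of configurations is
again related by `γ2`: `(vᵗ + t)[r := 0] x = v' x − g' x` for all `x`. -/
theorem timed_transition_well_defined {L X Act Obs : Type}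
    [Fintype L] [Fintype X] [Fintype Act] [Fintype Obs]
    (G : ISRGame L X Act Obs) (hE : G.E.Finite)
    (hflow : ∀ l x, G.flow l x = 1)
    (l : L) (v : X → ℝ) (g : X → ℚ) (vt : X → ℝ)
    (hvt : ∀ x, vt x = v x - (g x : ℝ))
    (m : Act × NNReal) (l' : L) (v' : X → ℝ)
    (h : (ISRGame.semantics G).trans (l, v) m (l', v')) :
    ∃ g' : X → ℚ,
      (ISRGame.semantics (timedOf G)).trans
        ((l, g), vt) m ((l', g'), fun x => v' x - (g' x : ℝ)) :=
  timed_transition_well_defined_general G hflow l v g vt hvt m l' v' h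
end
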